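/- arXiv:2004.05883 — 3 statements merged into one kernel-verified Lean document; each statement's English description precedes it below -/
import Mathlib

section
/- Let (P, dist) be a finite metric space whose doubling dimension is at most d, i.e., for every p ∈ P and every real R > 0 the ball ball_P(p,R) can be covered by at most 2^d balls in P of radius R/2 centered at points of P. Let S be a subset of P of size n, let μ ≥ 1 be a real number, and set c = 2(8μ)^d; assume n ≥ c + 1. For p ∈ S, let R_p = min{r > 0 : |ball_S(p,r)| ≥ n/c}, and call p good if |ball_S(p, μ·R_p)| ≤ n/2. Then the number of good points in S is at least n/c; equivalently, a uniformly random point of S is good with probability at least 1/c. -/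
/-! Let `p₀` minimise `R_p` over `S`. The ball `ball_S(p₀, R_{p₀})` has at least `n / c` points, and
each of them is good: for `q` in it, `R_q ≤ 2 R_{p₀}`, and `k` halvings of the doubling property
(with `4μ < 2^k ≤ 8μ`) cover `ball(q, 2μ R_{p₀})` by at most `(8μ)^d` balls of radius `ρ < R_{p₀} / 2`.
A ball of radius `ρ` holding more than `n / c` points of `S` would contain a point `s` with
`R_s ≤ 2ρ < R_{p₀}`, so each of these small balls holds at most `n / c` points, and
`|ball_S(q, μ R_q)| ≤ (8μ)^d · n / c = n / 2`. -/

open Metric Finset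

def DoublingDimLE (P : Type*) [PseudoMetricSpace P] (d : ℝ) : Prop :=
  ∀ (p : P) (R : ℝ), 0 < R → ∃ C : Finset P,
    (C.card : ℝ) ≤ (2 : ℝ) ^ d ∧ closedBall p R ⊆ ⋃ c ∈ C, closedBall c (R / 2)

section

variable {P : Type*} [PseudoMetricSpace P]

noncomputable def ballIn (S : Finset P) (p : P) (r : ℝ) : Finset P :=
  S.filter fun x => dist p x ≤ r

lemma mem_ballIn {S : Finset P} {p x : P} {r : ℝ} : x ∈ ballIn S p r ↔ x ∈ S ∧ dist p x ≤ r :=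
  mem_filter

lemma ballIn_subset_ballIn {S : Finset P} {p q : P} {r s : ℝ} (h : dist q p + r ≤ s) :
    ballIn S p r ⊆ ballIn S q s := fun x hx => by
  rw [mem_ballIn] at hx ⊢
  exact ⟨hx.1, by linarith [dist_triangle q p x]⟩

lemma DoublingDimLE.exists_cover_closedBall_div_two_pow {d : ℝ} (hP : DoublingDimLE P d)
    (k : ℕ) (p : P) {R : ℝ} (hR : 0 < R) : ∃ C : Finset P,
      (C.card : ℝ) ≤ ((2 : ℝ) ^ k) ^ d ∧ closedBall p R ⊆ ⋃ c ∈ C, closedBall c (R / 2 ^ k) := by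
  classical
  induction k with
  | zero => exact ⟨{p}, by simp, by simp⟩
  | succ k ih =>
    obtain ⟨C, hC, hcov⟩ := ih
    choose D hD hDcov using fun c : P => hP c (R / 2 ^ k) (by positivity)
    refine ⟨C.biUnion D, ?_, fun x hx => ?_⟩
    · calc ((C.biUnion D).card : ℝ) ≤ ∑ c ∈ C, ((D c).card : ℝ) := mod_cast card_biUnion_le
        _ ≤ C.card • (2 : ℝ) ^ d := sum_le_card_nsmul _ _ _ fun c _ => hD c
        _ ≤ ((2 : ℝ) ^ k) ^ d * 2 ^ d := by
          rw [nsmul_eq_mul]; gcongr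
        _ = ((2 : ℝ) ^ (k + 1)) ^ d := by
          rw [pow_succ, Real.mul_rpow (by positivity) (by positivity)]
    · obtain ⟨c, hc, hxc⟩ := Set.mem_iUnion₂.1 (hcov hx)
      obtain ⟨e, he, hxe⟩ := Set.mem_iUnion₂.1 (hDcov c hxc)
      refine Set.mem_iUnion₂.2 ⟨e, mem_biUnion.2 ⟨c, hc, he⟩, ?_⟩
      rwa [pow_succ, ← div_div]

lemma card_ballIn_le_of_cover {S C : Finset P} {p : P} {R ρ m : ℝ}
    (hcov : closedBall p R ⊆ ⋃ c ∈ C, closedBall c ρ) (hm : ∀ c ∈ C, (#(ballIn S c ρ) : ℝ) ≤ m) :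
    (#(ballIn S p R) : ℝ) ≤ C.card * m := by
  classical
  have hsub : ballIn S p R ⊆ C.biUnion (ballIn S · ρ) := fun x hx => by
    rw [mem_ballIn] at hx
    obtain ⟨c, hc, hxc⟩ := Set.mem_iUnion₂.1 (hcov (mem_closedBall'.2 hx.2))
    exact mem_biUnion.2 ⟨c, hc, mem_ballIn.2 ⟨hx.1, mem_closedBall'.1 hxc⟩⟩
  calc (#(ballIn S p R) : ℝ) ≤ ∑ c ∈ C, (#(ballIn S c ρ) : ℝ) :=
        mod_cast (card_le_card hsub).trans card_biUnion_le
    _ ≤ C.card • m := sum_le_card_nsmul _ _ _ hm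
    _ = C.card * m := nsmul_eq_mul _ _

section MinimalRadius

variable {S : Finset P} {m : ℝ} {Rp : P → ℝ}
  (hRp : ∀ p ∈ S, IsLeast {r : ℝ | 0 < r ∧ m ≤ (#(ballIn S p r) : ℝ)} (Rp p))
include hRp

lemma radius_le_radius_add_dist {p q : P} (hp : p ∈ S) (hq : q ∈ S) :
    Rp q ≤ Rp p + dist p q := by
  obtain ⟨hpos, hcard⟩ := (hRp p hp).1
  refine (hRp q hq).2 ⟨by positivity, hcard.trans ?_⟩
  exact mod_cast card_le_card (ballIn_subset_ballIn (by rw [dist_comm]; linarith))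

lemma card_ballIn_le_of_two_mul_lt_radius (hm : 0 ≤ m) {r ρ : ℝ} (hmin : ∀ s ∈ S, r ≤ Rp s)
    (hρ : 0 < ρ) (hρr : 2 * ρ < r) (c : P) : (#(ballIn S c ρ) : ℝ) ≤ m := by
  rcases (ballIn S c ρ).eq_empty_or_nonempty with hempty | ⟨s, hs⟩
  · simpa [hempty] using hm
  obtain ⟨hsS, hcs⟩ := mem_ballIn.1 hs
  by_contra! hlt
  have hsub : ballIn S c ρ ⊆ ballIn S s (2 * ρ) :=
    ballIn_subset_ballIn (by rw [dist_comm]; linarith)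
  have : Rp s ≤ 2 * ρ :=
    (hRp s hsS).2 ⟨by positivity, hlt.le.trans (mod_cast card_le_card hsub)⟩
  linarith [hmin s hsS]

lemma card_ballIn_mul_radius_le {d μ : ℝ} (hP : DoublingDimLE P d) (hd : 0 ≤ d) (hμ : 1 ≤ μ)
    (hm : 0 ≤ m) {p₀ q : P} (hp₀ : p₀ ∈ S) (hmin : ∀ s ∈ S, Rp p₀ ≤ Rp s)
    (hq : q ∈ ballIn S p₀ (Rp p₀)) : (#(ballIn S q (μ * Rp q)) : ℝ) ≤ (8 * μ) ^ d * m := by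
  set r := Rp p₀
  have hr : 0 < r := (hRp p₀ hp₀).1.1
  obtain ⟨hqS, hp₀q⟩ := mem_ballIn.1 hq
  have hRq : Rp q ≤ 2 * r := by linarith [radius_le_radius_add_dist hRp hp₀ hqS]
  obtain ⟨j, hj_le, hj_lt⟩ := exists_nat_pow_near (by linarith : (1 : ℝ) ≤ 4 * μ) one_lt_two
  obtain ⟨C, hC, hcov⟩ := hP.exists_cover_closedBall_div_two_pow (j + 1) q
    (by positivity : 0 < 2 * μ * r)
  have h2k : (2 : ℝ) ^ (j + 1) ≤ 8 * μ := by rw [pow_succ]; linarith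
  have hρr : 2 * (2 * μ * r / 2 ^ (j + 1)) < r := by
    rw [← mul_div_assoc, div_lt_iff₀ (by positivity)]; nlinarith
  calc (#(ballIn S q (μ * Rp q)) : ℝ) ≤ #(ballIn S q (2 * μ * r)) :=
        mod_cast card_le_card (ballIn_subset_ballIn (by rw [dist_self]; nlinarith))
    _ ≤ C.card * m := card_ballIn_le_of_cover hcov
        fun c _ => card_ballIn_le_of_two_mul_lt_radius hRp hm hmin (by positivity) hρr c
    _ ≤ (8 * μ) ^ d * m := by
        gcongr
        exact hC.trans (Real.rpow_le_rpow (by positivity) h2k hd)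

end MinimalRadius

end

theorem many_good_points_general {P : Type*} [MetricSpace P]
    (d : ℝ) (hd : 1 ≤ d)
    (hdoub : ∀ (p : P) (R : ℝ), 0 < R → ∃ C : Finset P,
      (C.card : ℝ) ≤ (2 : ℝ) ^ d ∧
      Metric.closedBall p R ⊆ ⋃ c ∈ C, Metric.closedBall c (R / 2))
    (S : Finset P) (n : ℕ) (hn : S.card = n)
    (μ : ℝ) (hμ : 1 ≤ μ)
    (c : ℝ) (hc : c = 2 * (8 * μ) ^ d)
    (Rp : P → ℝ)
    (hRp : ∀ p ∈ S, IsLeast {r : ℝ | 0 < r ∧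
      (n : ℝ) / c ≤ ((S.filter fun x => dist p x ≤ r).card : ℝ)} (Rp p)) :
    (n : ℝ) / c ≤
      ((S.filter fun p =>
        ((S.filter fun x => dist p x ≤ μ * Rp p).card : ℝ) ≤ (n : ℝ) / 2).card : ℝ) := by
  rcases S.eq_empty_or_nonempty with rfl | hS
  · simp [← hn]
  obtain ⟨p₀, hp₀, hmin⟩ := S.exists_min_image Rp hS
  have hc0 : 0 < c := hc ▸ by positivity
  have hgood : ballIn S p₀ (Rp p₀) ⊆
      S.filter fun p => (#(ballIn S p (μ * Rp p)) : ℝ) ≤ n / 2 := fun q hq => by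
    refine mem_filter.2 ⟨(mem_ballIn.1 hq).1, ?_⟩
    calc (#(ballIn S q (μ * Rp q)) : ℝ) ≤ (8 * μ) ^ d * (n / c) :=
          card_ballIn_mul_radius_le hRp hdoub (by linarith) hμ (by positivity) hp₀ hmin hq
      _ = n / 2 := by rw [hc]; field_simp
  calc (n : ℝ) / c ≤ #(ballIn S p₀ (Rp p₀)) := (hRp p₀ hp₀).1.2
    _ ≤ _ := mod_cast card_le_card hgood

/-- Let `(P, dist)` be a finite metric space of doubling dimension at most `d`,
let `S ⊆ P` have `n` points, let `μ ≥ 1`, `c = 2 (8μ)^d`, and `n ≥ c + 1`.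
For `p ∈ S`, let `R_p` be the least `r > 0` with `|ball_S(p, r)| ≥ n / c`, and
call `p` good if `|ball_S(p, μ R_p)| ≤ n / 2`. Then the number of good points of
`S` is at least `n / c` (so a uniformly random point of `S` is good with
probability at least `1 / c`). -/
theorem many_good_points {P : Type*} [MetricSpace P] [Fintype P]
    (d : ℝ) (hd : 1 ≤ d)
    (hdoub : ∀ (p : P) (R : ℝ), 0 < R → ∃ C : Finset P,
      (C.card : ℝ) ≤ (2 : ℝ) ^ d ∧
      Metric.closedBall p R ⊆ ⋃ c ∈ C, Metric.closedBall c (R / 2))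
    (S : Finset P) (n : ℕ) (hn : S.card = n)
    (μ : ℝ) (hμ : 1 ≤ μ)
    (c : ℝ) (hc : c = 2 * (8 * μ) ^ d)
    (hnc : c + 1 ≤ (n : ℝ))
    (Rp : P → ℝ)
    (hRp : ∀ p ∈ S, IsLeast {r : ℝ | 0 < r ∧
      (n : ℝ) / c ≤ ((S.filter fun x => dist p x ≤ r).card : ℝ)} (Rp p)) :
    (n : ℝ) / c ≤
      ((S.filter fun p =>
        ((S.filter fun x => dist p x ≤ μ * Rp p).card : ℝ) ≤ (n : ℝ) / 2).card : ℝ) :=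
  many_good_points_general d hd hdoub S n hn μ hμ c hc Rp hRp
end

section
/- Let (P, dist) be a finite metric space whose doubling dimension is at most d, i.e., for every p ∈ P and every real R > 0 the ball ball_P(p,R) can be covered by at most 2^d balls in P of radius R/2 centered at points of P. Let S be a subset of P of size n, let t ≥ 1 be an integer, and set c = 2(4e)^d. If n ≥ c + 1, then there exist a point p ∈ S and a real number R > 0 such that (1) |ball_S(p,R)| ≥ n/c, (2) |annulus_S(p, R, (1+1/t)R)| ≤ n/t, and (3) |S \ ball_S(p, (1+1/t)R)| ≥ n/2. -/
open Finset Metric Real in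
private lemma sparse_sep_cover_iter {P : Type*} [MetricSpace P] (d : ℝ)
    (hdoub : ∀ (p : P) (R : ℝ), 0 < R → ∃ C : Finset P,
      (C.card : ℝ) ≤ (2 : ℝ) ^ d ∧
      Metric.closedBall p R ⊆ ⋃ c ∈ C, Metric.closedBall c (R / 2)) :
    ∀ (k : ℕ) (p : P) (R : ℝ), 0 < R → ∃ C : Finset P,
      (C.card : ℝ) ≤ ((2:ℝ) ^ d) ^ k ∧
      Metric.closedBall p R ⊆ ⋃ c ∈ C, Metric.closedBall c (R / 2 ^ k) := by
  classical
  intro k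
  induction k with
  | zero =>
    intro p R hR
    exact ⟨{p}, by simp, by simp⟩
  | succ k ih =>
    intro p R hR
    obtain ⟨C, hCcard, hCcov⟩ := ih p R hR
    have hρ : 0 < R / 2 ^ k := by positivity
    choose f hf1 hf2 using fun c : P => hdoub c (R / 2 ^ k) hρ
    refine ⟨C.biUnion f, ?_, ?_⟩
    · calc ((C.biUnion f).card : ℝ) ≤ ∑ c ∈ C, ((f c).card : ℝ) := by
            exact_mod_cast Finset.card_biUnion_le
        _ ≤ ∑ _c ∈ C, (2:ℝ) ^ d := Finset.sum_le_sum (fun c _ => hf1 c)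
        _ = C.card * (2:ℝ) ^ d := by rw [Finset.sum_const, nsmul_eq_mul]
        _ ≤ ((2:ℝ) ^ d) ^ k * (2:ℝ) ^ d :=
            mul_le_mul_of_nonneg_right hCcard (Real.rpow_nonneg (by norm_num) d)
        _ = ((2:ℝ) ^ d) ^ (k + 1) := by ring
    · intro x hx
      obtain ⟨cc, hcc, hx2⟩ := Set.mem_iUnion₂.mp (hCcov hx)
      obtain ⟨c', hc', hx3⟩ := Set.mem_iUnion₂.mp (hf2 cc hx2)
      refine Set.mem_iUnion₂.mpr ⟨c', Finset.mem_biUnion.mpr ⟨cc, hcc, hc'⟩, ?_⟩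
      have : R / 2 ^ k / 2 = R / 2 ^ (k + 1) := by ring
      rwa [this] at hx3

open Finset Metric Real in
private lemma sparse_sep_dense {P : Type*} [MetricSpace P] [Fintype P]
    (d : ℝ) (hd0 : (0:ℝ) ≤ d) (he2 : (2:ℝ) ≤ Real.exp 1) (he4 : Real.exp 1 < 4)
    (S : Finset P) (n : ℕ) (hn : S.card = n) (c : ℝ)
    (hc : c = 2 * (4 * Real.exp 1) ^ d) (hcpos : 0 < c) (hnpos : (0:ℝ) < n)
    (q0 : P) (hq0 : q0 ∈ S) (r : ℝ) (hrpos : 0 < r)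
    (hq0big : (n:ℝ)/2 < ((S.filter fun x => dist q0 x ≤ r).card : ℝ))
    (cover_iter : ∀ (k : ℕ) (p : P) (R : ℝ), 0 < R → ∃ C : Finset P,
      (C.card : ℝ) ≤ ((2:ℝ) ^ d) ^ k ∧
      Metric.closedBall p R ⊆ ⋃ cc ∈ C, Metric.closedBall cc (R / 2 ^ k)) :
    ∃ p ∈ S, dist q0 p ≤ r ∧ (n:ℝ)/c ≤ ((S.filter fun x => dist p x ≤ r/4).card : ℝ) := by
  classical
  have h8d : ((2:ℝ) ^ d) ^ (3:ℕ) = (8:ℝ) ^ d := by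
    rw [← Real.rpow_natCast ((2:ℝ) ^ d) 3, ← Real.rpow_mul (by norm_num : (0:ℝ) ≤ 2),
      mul_comm d ((3:ℕ):ℝ), Real.rpow_mul (by norm_num : (0:ℝ) ≤ 2)]
    norm_num [Real.rpow_natCast]
  have h8e : (8:ℝ) ^ d ≤ (4 * Real.exp 1) ^ d :=
    Real.rpow_le_rpow (by norm_num) (by linarith) hd0
  have h8pos : (0:ℝ) < (8:ℝ) ^ d := Real.rpow_pos_of_pos (by norm_num) d
  obtain ⟨C, hCcard, hCcov⟩ := cover_iter 3 q0 r hrpos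
  rw [h8d] at hCcard
  set B0 := S.filter (fun x => dist q0 x ≤ r) with hB0
  set F : P → Finset P := fun cc => B0.filter (fun x => dist cc x ≤ r/8) with hF
  have hsub : B0 ⊆ C.biUnion F := by
    intro x hx
    have hx2 : dist q0 x ≤ r := (Finset.mem_filter.mp hx).2
    have hxb : x ∈ Metric.closedBall q0 r := by
      rw [Metric.mem_closedBall, dist_comm]; exact hx2
    obtain ⟨cc, hcc, hx3⟩ := Set.mem_iUnion₂.mp (hCcov hxb)
    refine Finset.mem_biUnion.mpr ⟨cc, hcc, Finset.mem_filter.mpr ⟨hx, ?_⟩⟩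
    rw [Metric.mem_closedBall] at hx3
    rw [dist_comm]
    calc dist x cc ≤ r / 2 ^ 3 := hx3
      _ = r / 8 := by norm_num
  have hB0ne : B0.Nonempty := by
    rw [← Finset.card_pos]
    by_contra h2
    push_neg at h2
    simp only [Nat.le_zero] at h2
    rw [h2] at hq0big
    simp at hq0big
    linarith
  have hCne : C.Nonempty := by
    obtain ⟨x, hx⟩ := hB0ne
    obtain ⟨cc, hcc, _⟩ := Finset.mem_biUnion.mp (hsub hx)
    exact ⟨cc, hcc⟩
  obtain ⟨c0, hc0, hmax⟩ := Finset.exists_max_image C (fun cc => (F cc).card) hCne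
  have hsum : (B0.card : ℝ) ≤ (C.card : ℝ) * ((F c0).card : ℝ) := by
    have h1 : B0.card ≤ ∑ cc ∈ C, (F cc).card :=
      le_trans (Finset.card_le_card hsub) Finset.card_biUnion_le
    have h2 : ∑ cc ∈ C, (F cc).card ≤ C.card * (F c0).card := by
      calc ∑ cc ∈ C, (F cc).card ≤ ∑ _cc ∈ C, (F c0).card :=
            Finset.sum_le_sum (fun cc hcc => hmax cc hcc)
        _ = C.card * (F c0).card := by rw [Finset.sum_const, smul_eq_mul]
    exact_mod_cast le_trans h1 h2
  have hfiber : (n:ℝ)/c ≤ ((F c0).card : ℝ) := by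
    have hC8 : (C.card : ℝ) ≤ (8:ℝ) ^ d := hCcard
    have hb : (n:ℝ)/2 < (8:ℝ)^d * ((F c0).card : ℝ) := by
      have hFnn : (0:ℝ) ≤ ((F c0).card : ℝ) := by positivity
      nlinarith [hq0big, hsum]
    rw [hc]
    rw [div_le_iff₀ (by nlinarith)]
    have h1 : (n:ℝ) / 2 / (8:ℝ)^d < ((F c0).card : ℝ) := by
      rw [div_lt_iff₀ h8pos]; linarith [hb]
    have h2 : (n:ℝ) ≤ ((F c0).card : ℝ) * (2 * (8:ℝ)^d) := by
      have := mul_lt_mul_of_pos_right h1 h8pos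
      rw [div_mul_cancel₀] at this
      · nlinarith
      · exact ne_of_gt h8pos
    calc (n:ℝ) ≤ ((F c0).card : ℝ) * (2 * (8:ℝ)^d) := h2
      _ ≤ ((F c0).card : ℝ) * (2 * (4 * Real.exp 1)^d) := by
          have hFnn : (0:ℝ) ≤ ((F c0).card : ℝ) := by positivity
          nlinarith
  have hFne : (F c0).Nonempty := by
    rw [← Finset.card_pos]
    by_contra h2
    push_neg at h2
    simp only [Nat.le_zero] at h2
    rw [h2] at hfiber
    simp at hfiber
    have : (0:ℝ) < (n:ℝ)/c := by positivity
    linarith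
  obtain ⟨p, hp⟩ := hFne
  have hpB0 : p ∈ B0 := (Finset.mem_filter.mp hp).1
  have hpc0 : dist c0 p ≤ r/8 := (Finset.mem_filter.mp hp).2
  refine ⟨p, (Finset.mem_filter.mp hpB0).1, (Finset.mem_filter.mp hpB0).2, ?_⟩
  refine le_trans hfiber ?_
  have : F c0 ⊆ S.filter (fun x => dist p x ≤ r/4) := by
    intro x hx
    have hxB0 : x ∈ B0 := (Finset.mem_filter.mp hx).1
    have hxc0 : dist c0 x ≤ r/8 := (Finset.mem_filter.mp hx).2
    refine Finset.mem_filter.mpr ⟨(Finset.mem_filter.mp hxB0).1, ?_⟩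
    calc dist p x ≤ dist p c0 + dist c0 x := dist_triangle _ _ _
      _ ≤ r/8 + r/8 := by rw [dist_comm]; exact add_le_add hpc0 hxc0
      _ = r/4 := by ring
  exact_mod_cast Finset.card_le_card this

open Finset Metric Real in
private lemma sparse_sep_annulus {P : Type*} [MetricSpace P] [Fintype P]
    (S : Finset P) (n : ℕ) (hn : S.card = n) (t : ℕ) (ht : 1 ≤ t)
    (c : ℝ) (hcpos : 0 < c) (hnpos : (0:ℝ) < n) (htpos : (0:ℝ) < (t:ℝ))
    (he4 : Real.exp 1 < 4)
    (p : P) (hpS : p ∈ S) (r : ℝ) (hrpos : 0 < r)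
    (hball : (n:ℝ)/c ≤ ((S.filter fun x => dist p x ≤ r/4).card : ℝ))
    (hmin : ∀ q ∈ S, ∀ R' : ℝ, R' < r →
      ((S.filter fun x => dist q x ≤ R').card : ℝ) ≤ (n:ℝ)/2) :
    ∃ R : ℝ, 0 < R ∧
      (n : ℝ) / c ≤ ((S.filter fun x => dist p x ≤ R).card : ℝ) ∧
      ((S.filter fun x =>
          R < dist p x ∧ dist p x ≤ (1 + 1 / (t : ℝ)) * R).card : ℝ) ≤ (n : ℝ) / (t : ℝ) ∧
      (n : ℝ) / 2 ≤
        ((S.filter fun x => ¬ dist p x ≤ (1 + 1 / (t : ℝ)) * R).card : ℝ) := by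
  classical
  set u : ℝ := 1 + 1/(t:ℝ) with hu
  have hu1 : (1:ℝ) ≤ u := by
    rw [hu]; have : (0:ℝ) < 1/(t:ℝ) := by positivity
    linarith
  have hu0 : (0:ℝ) ≤ u := by linarith
  set g : ℕ → ℝ := fun i => (r/4) * u ^ i with hg
  have hgpos : ∀ i, 0 < g i := fun i => by
    have : (0:ℝ) < u ^ i := pow_pos (by linarith) i
    rw [hg]; positivity
  have hgmono : ∀ i j : ℕ, i ≤ j → g i ≤ g j := by
    intro i j hij
    have := pow_le_pow_right₀ hu1 hij
    rw [hg]; simp only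
    nlinarith
  set A : ℕ → Finset P := fun i =>
    S.filter (fun x => g i < dist p x ∧ dist p x ≤ g (i+1)) with hA
  have hpigeon : ∃ i ∈ Finset.range t, ((A i).card : ℝ) ≤ (n:ℝ)/(t:ℝ) := by
    by_contra h
    push_neg at h
    have hdisj : ∀ i ∈ Finset.range t, ∀ j ∈ Finset.range t, i ≠ j →
        Disjoint (A i) (A j) := by
      intro i _ j _ hij
      rw [Finset.disjoint_left]
      intro x hxi hxj
      have h1 := (Finset.mem_filter.mp hxi).2
      have h2 := (Finset.mem_filter.mp hxj).2
      rcases hij.lt_or_gt with hlt | hlt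
      · have : g (i+1) ≤ g j := hgmono _ _ hlt
        linarith [h1.2, h2.1]
      · have : g (j+1) ≤ g i := hgmono _ _ hlt
        linarith [h1.1, h2.2]
    have hsum1 : ∑ i ∈ Finset.range t, (A i).card ≤ n := by
      rw [← Finset.card_biUnion hdisj, ← hn]
      exact Finset.card_le_card (fun x hx => (Finset.mem_filter.mp
        ((Finset.mem_biUnion.mp hx).choose_spec.2)).1)
    have hsum2 : (n:ℝ) < ∑ i ∈ Finset.range t, ((A i).card : ℝ) := by
      calc (n:ℝ) = ∑ _i ∈ Finset.range t, (n:ℝ)/(t:ℝ) := by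
            rw [Finset.sum_const, Finset.card_range, nsmul_eq_mul]
            field_simp
        _ < ∑ i ∈ Finset.range t, ((A i).card : ℝ) :=
            Finset.sum_lt_sum_of_nonempty (Finset.nonempty_range_iff.mpr
              (Nat.one_le_iff_ne_zero.mp ht)) (fun i hi => h i hi)
    have : (↑(∑ i ∈ Finset.range t, (A i).card) : ℝ) ≤ (n:ℝ) := by exact_mod_cast hsum1
    push_cast at this
    linarith
  obtain ⟨i, hi, hAi⟩ := hpigeon
  have hit : i + 1 ≤ t := Finset.mem_range.mp hi
  refine ⟨g i, hgpos i, ?_, ?_, ?_⟩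
  · refine le_trans hball ?_
    have : S.filter (fun x => dist p x ≤ r/4) ⊆ S.filter (fun x => dist p x ≤ g i) := by
      intro x hx
      refine Finset.mem_filter.mpr ⟨(Finset.mem_filter.mp hx).1, ?_⟩
      have h0 : g 0 = r/4 := by rw [hg]; simp
      have := hgmono 0 i (Nat.zero_le i)
      rw [h0] at this
      linarith [(Finset.mem_filter.mp hx).2]
    exact_mod_cast Finset.card_le_card this
  · have hgsucc : (1 + 1/(t:ℝ)) * g i = g (i+1) := by
      rw [hg]; simp only [pow_succ]; ring
    rw [hgsucc]
    exact hAi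
  · have hgsucc : (1 + 1/(t:ℝ)) * g i = g (i+1) := by
      rw [hg]; simp only [pow_succ]; ring
    rw [hgsucc]
    have hlt : g (i+1) < r := by
      have h1 : u ^ (i+1) ≤ u ^ t := pow_le_pow_right₀ hu1 hit
      have h2 : u ^ t ≤ Real.exp 1 := by
        have h3 : u ≤ Real.exp (1/(t:ℝ)) := by
          have := Real.add_one_le_exp (1/(t:ℝ))
          rw [hu]; linarith
        calc u ^ t ≤ (Real.exp (1/(t:ℝ))) ^ t := pow_le_pow_left₀ hu0 h3 t
          _ = Real.exp ((t:ℝ) * (1/(t:ℝ))) := (Real.exp_nat_mul _ t).symm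
          _ = Real.exp 1 := by
              congr 1
              field_simp
      rw [hg]; simp only
      nlinarith
    have hle := hmin p hpS (g (i+1)) hlt
    have hcount := Finset.card_filter_add_card_filter_not
      (s := S) (p := fun x => dist p x ≤ g (i+1))
    rw [hn] at hcount
    have : ((S.filter fun x => dist p x ≤ g (i+1)).card : ℝ)
        + ((S.filter fun x => ¬ dist p x ≤ g (i+1)).card : ℝ) = (n:ℝ) := by
      exact_mod_cast hcount
    linarith

/-- **Sparse separating annulus (Abam and Har-Peled).** Let `(P, dist)` be a
finite metric space of doubling dimension at most `d`, let `S ⊆ P` have `n`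
points, let `t ≥ 1` be an integer, and set `c = 2 (4e)^d`. If `n ≥ c + 1`, then
there exist a point `p ∈ S` and a real `R > 0` such that
(1) `|ball_S(p, R)| ≥ n / c`,
(2) `|annulus_S(p, R, (1 + 1/t) R)| ≤ n / t`, and
(3) `|S \ ball_S(p, (1 + 1/t) R)| ≥ n / 2`. -/
theorem sparse_separating_annulus {P : Type*} [MetricSpace P] [Fintype P]
    (d : ℝ) (hd : 1 ≤ d)
    (hdoub : ∀ (p : P) (R : ℝ), 0 < R → ∃ C : Finset P,
      (C.card : ℝ) ≤ (2 : ℝ) ^ d ∧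
      Metric.closedBall p R ⊆ ⋃ c ∈ C, Metric.closedBall c (R / 2))
    (S : Finset P) (n : ℕ) (hn : S.card = n)
    (t : ℕ) (ht : 1 ≤ t)
    (c : ℝ) (hc : c = 2 * (4 * Real.exp 1) ^ d)
    (hnc : c + 1 ≤ (n : ℝ)) :
    ∃ p ∈ S, ∃ R : ℝ, 0 < R ∧
      (n : ℝ) / c ≤ ((S.filter fun x => dist p x ≤ R).card : ℝ) ∧
      ((S.filter fun x =>
          R < dist p x ∧ dist p x ≤ (1 + 1 / (t : ℝ)) * R).card : ℝ) ≤ (n : ℝ) / (t : ℝ) ∧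
      (n : ℝ) / 2 ≤
        ((S.filter fun x => ¬ dist p x ≤ (1 + 1 / (t : ℝ)) * R).card : ℝ) := by
  classical
  have hd0 : (0:ℝ) ≤ d := by linarith
  have he2 : (2:ℝ) ≤ Real.exp 1 := by
    have := Real.add_one_le_exp (1:ℝ); linarith
  have he4 : Real.exp 1 < 4 := by
    have := Real.exp_one_lt_d9; linarith
  have h4e1 : (1:ℝ) ≤ (4 * Real.exp 1) ^ d := by
    calc (1:ℝ) = (4 * Real.exp 1) ^ (0:ℝ) := (Real.rpow_zero _).symm
      _ ≤ (4 * Real.exp 1) ^ d := Real.rpow_le_rpow_of_exponent_le (by linarith) hd0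
  have hcpos : 0 < c := by rw [hc]; nlinarith
  have hn2 : (2:ℝ) ≤ (n:ℝ) := by nlinarith
  have hnpos : (0:ℝ) < n := by linarith
  have htpos : (0:ℝ) < (t:ℝ) := by exact_mod_cast ht
  have hSne : S.Nonempty := by
    rw [← Finset.card_pos, hn]; exact_mod_cast hnpos
  -- the finite set of pairwise distances
  set D : Finset ℝ := (S ×ˢ S).image (fun q => dist q.1 q.2) with hD
  set G : Finset ℝ := D.filter
    (fun δ => ∃ q ∈ S, (n:ℝ)/2 < ((S.filter fun x => dist q x ≤ δ).card : ℝ)) with hG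
  have hGne : G.Nonempty := by
    obtain ⟨q, hq⟩ := id hSne
    obtain ⟨x, hx, hδ⟩ := Finset.exists_mem_eq_sup' hSne (dist q)
    refine ⟨S.sup' hSne (dist q), Finset.mem_filter.mpr ⟨?_, q, hq, ?_⟩⟩
    · exact Finset.mem_image.mpr ⟨(q, x), Finset.mem_product.mpr ⟨hq, hx⟩, hδ.symm⟩
    · have : S.filter (fun y => dist q y ≤ S.sup' hSne (dist q)) = S :=
        Finset.filter_true_of_mem (fun y hy => Finset.le_sup' (dist q) hy)
      rw [this, hn]; linarith
  set r : ℝ := G.min' hGne with hr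
  have hrG : r ∈ G := G.min'_mem hGne
  obtain ⟨hrD, q0, hq0, hq0big⟩ := Finset.mem_filter.mp hrG
  have hrpos : 0 < r := by
    by_contra h
    push_neg at h
    have hsub : S.filter (fun x => dist q0 x ≤ r) ⊆ {q0} := by
      intro x hx
      obtain ⟨_, hx2⟩ := Finset.mem_filter.mp hx
      have : dist q0 x = 0 := le_antisymm (hx2.trans h) dist_nonneg
      simp [dist_eq_zero.mp this]
    have := Finset.card_le_card hsub
    simp only [Finset.card_singleton] at this
    have : ((S.filter fun x => dist q0 x ≤ r).card : ℝ) ≤ 1 := by exact_mod_cast this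
    linarith
  -- minimality of r
  have hmin : ∀ q ∈ S, ∀ R' : ℝ, R' < r →
      ((S.filter fun x => dist q x ≤ R').card : ℝ) ≤ (n:ℝ)/2 := by
    intro q hq R' hR'
    by_contra h
    push_neg at h
    have hFne : (S.filter fun x => dist q x ≤ R').Nonempty := by
      rw [← Finset.card_pos]
      by_contra h2
      push_neg at h2
      interval_cases h3 : (S.filter fun x => dist q x ≤ R').card
      · simp [h3] at h; linarith
    obtain ⟨x, hx, hδ⟩ := Finset.exists_mem_eq_sup' hFne (dist q)
    set δ := (S.filter fun x => dist q x ≤ R').sup' hFne (dist q) with hδdef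
    have hxS : x ∈ S := (Finset.mem_filter.mp hx).1
    have hxR : dist q x ≤ R' := (Finset.mem_filter.mp hx).2
    have hδD : δ ∈ D := Finset.mem_image.mpr ⟨(q, x), Finset.mem_product.mpr ⟨hq, hxS⟩, hδ.symm⟩
    have hsub : (S.filter fun y => dist q y ≤ R') ⊆ S.filter fun y => dist q y ≤ δ := by
      intro y hy
      exact Finset.mem_filter.mpr ⟨(Finset.mem_filter.mp hy).1, Finset.le_sup' (dist q) hy⟩
    have hδG : δ ∈ G := Finset.mem_filter.mpr ⟨hδD, q, hq,
      lt_of_lt_of_le h (by exact_mod_cast Finset.card_le_card hsub)⟩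
    have h1 : r ≤ δ := G.min'_le δ hδG
    have h2 : δ ≤ R' := hδ ▸ hxR
    linarith
  obtain ⟨p, hpS, _, hball⟩ := sparse_sep_dense d hd0 he2 he4 S n hn c hc hcpos hnpos
    q0 hq0 r hrpos hq0big (sparse_sep_cover_iter d hdoub)
  exact ⟨p, hpS, sparse_sep_annulus S n hn t ht c hcpos hnpos htpos he4 p hpS r hrpos hball hmin⟩
end

section
/- Let (P, dist) be a finite metric space with |P| ≥ 2 whose doubling dimension is at most d ≥ 1, i.e., for every p ∈ P and every real R > 0 the ball ball_P(p,R) can be covered by at most 2^d balls in P of radius R/2 centered at points of P. Let δ = δ(P), let S ⊆ P have size n ≥ 2(16e)^d with δ(S) = δ, set c = 2(4e)^d and t = ⌊(1/(16e))·(n/2)^{1/d}⌋ (equivalently t = ⌊(1/4)·(n/c)^{1/d}⌋). Suppose p ∈ S and R > 0 satisfy |ball_S(p,R)| ≥ n/c, |annulus_S(p, R, (1+1/t)R)| ≤ n/t, and |S \ ball_S(p, (1+1/t)R)| ≥ n/2. Set S₁ = ball_S(p,R), S₂ = annulus_S(p, R, (1+1/t)R), S₃ = S \ (S₁ ∪ S₂),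 n' = |S₁ ∪ S₂|, and n'' = |S₂ ∪ S₃|. Then t ≥ 1, R/t ≥ δ, δ(S) = min(δ(S₁ ∪ S₂), δ(S₂ ∪ S₃)), and the sizes satisfy 2 ≤ n' ≤ (1 − 1/c)n, 2 ≤ n'' ≤ (1 − 1/c)n, and n' + n'' ≤ n + n/t. -/
open scoped ENNReal

/-- The closest-pair distance `δ(A)` of a finite point set `A` in a metric space:
the minimum of `dist x y` over distinct `x, y ∈ A`, and `∞` if `|A| ≤ 1`. -/
noncomputable def closestPairDist {P : Type*} [MetricSpace P] (A : Finset P) : ℝ≥0∞ :=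
  sInf {r : ℝ≥0∞ | ∃ x ∈ A, ∃ y ∈ A, x ≠ y ∧ r = edist x y}

lemma closestPairDist_le {P : Type*} [MetricSpace P] {A : Finset P} {x y : P}
    (hx : x ∈ A) (hy : y ∈ A) (hxy : x ≠ y) :
    closestPairDist A ≤ edist x y :=
  sInf_le ⟨x, hx, y, hy, hxy, rfl⟩

lemma closestPairDist_anti {P : Type*} [MetricSpace P] {A B : Finset P}
    (h : A ⊆ B) : closestPairDist B ≤ closestPairDist A :=
  sInf_le_sInf (fun r ⟨x, hx, y, hy, hxy, hr⟩ => ⟨x, h hx, y, h hy, hxy, hr⟩)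

lemma cover_iter {P : Type*} [MetricSpace P] [DecidableEq P] (d : ℝ)
    (hdoub : ∀ (p : P) (R : ℝ), 0 < R → ∃ C : Finset P,
      (C.card : ℝ) ≤ (2 : ℝ) ^ d ∧
      Metric.closedBall p R ⊆ ⋃ c ∈ C, Metric.closedBall c (R / 2))
    (p : P) (R : ℝ) (hR : 0 < R) (k : ℕ) :
    ∃ C : Finset P, (C.card : ℝ) ≤ ((2:ℝ) ^ d) ^ k ∧
      Metric.closedBall p R ⊆ ⋃ c ∈ C, Metric.closedBall c (R / 2 ^ k) := by
  induction k with
  | zero => exact ⟨{p}, by simp, by simp⟩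
  | succ k ih =>
    obtain ⟨C, hCcard, hCcov⟩ := ih
    have hr : 0 < R / 2 ^ k := by positivity
    choose f hf1 hf2 using fun c : P => hdoub c (R / 2 ^ k) hr
    refine ⟨C.biUnion f, ?_, ?_⟩
    · calc ((C.biUnion f).card : ℝ) ≤ ∑ c ∈ C, ((f c).card : ℝ) := by
            exact_mod_cast Nat.cast_le.2 Finset.card_biUnion_le
      _ ≤ ∑ _c ∈ C, (2:ℝ)^d := Finset.sum_le_sum fun c _ => hf1 c
      _ = C.card * (2:ℝ)^d := by simp [Finset.sum_const, nsmul_eq_mul]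
      _ ≤ ((2:ℝ)^d)^k * (2:ℝ)^d :=
            mul_le_mul_of_nonneg_right hCcard (by positivity)
      _ = ((2:ℝ)^d)^(k+1) := by ring
    · intro x hx
      have := hCcov hx
      simp only [Set.mem_iUnion, exists_prop] at this ⊢
      obtain ⟨c, hc, hxc⟩ := this
      have := hf2 c hxc
      simp only [Set.mem_iUnion, exists_prop] at this
      obtain ⟨c', hc', hxc'⟩ := this
      refine ⟨c', Finset.mem_biUnion.2 ⟨c, hc, hc'⟩, ?_⟩
      have : R / 2 ^ k / 2 = R / 2 ^ (k+1) := by ring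
      rwa [this] at hxc'

lemma pigeon {P : Type*} [MetricSpace P] (S₁ C : Finset P) (r : ℝ)
    (hcov : ∀ x ∈ S₁, ∃ c ∈ C, x ∈ Metric.closedBall c r)
    (hcard : C.card < S₁.card) :
    ∃ x ∈ S₁, ∃ y ∈ S₁, x ≠ y ∧ dist x y ≤ 2 * r := by
  classical
  set f : P → P := fun x => if h : x ∈ S₁ then (hcov x h).choose else x with hf
  have hmaps : ∀ x ∈ S₁, f x ∈ C := by
    intro x hx
    simp only [hf, dif_pos hx]
    exact (hcov x hx).choose_spec.1
  obtain ⟨x, hx, y, hy, hxy, hfeq⟩ :=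
    Finset.exists_ne_map_eq_of_card_lt_of_maps_to hcard hmaps
  refine ⟨x, hx, y, hy, hxy, ?_⟩
  have h1 : dist x (f x) ≤ r := by
    simp only [hf, dif_pos hx]
    exact Metric.mem_closedBall.1 (hcov x hx).choose_spec.2
  have h2 : dist y (f y) ≤ r := by
    simp only [hf, dif_pos hy]
    exact Metric.mem_closedBall.1 (hcov y hy).choose_spec.2
  calc dist x y ≤ dist x (f x) + dist (f x) y := dist_triangle _ _ _
    _ = dist x (f x) + dist y (f y) := by rw [hfeq, dist_comm (f y) y]
    _ ≤ r + r := add_le_add h1 h2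
    _ = 2 * r := by ring

set_option maxHeartbeats 1000000 in
/-- **Correctness of the recursive step of the closest-pair algorithm.**
Let `(P, dist)` be a finite metric space with `|P| ≥ 2` and doubling dimension at
most `d ≥ 1`, let `δ = δ(P)`, and let `S ⊆ P` have `n ≥ 2 (16e)^d` points with
`δ(S) = δ`. Set `c = 2 (4e)^d` and `t = ⌊(1/(16e)) (n/2)^(1/d)⌋`. Suppose
`p ∈ S`, `R > 0` satisfy `|ball_S(p, R)| ≥ n / c`,
`|annulus_S(p, R, (1 + 1/t) R)| ≤ n / t`, and `|S \ ball_S(p, (1 + 1/t) R)| ≥ n / 2`.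
With `S₁ = ball_S(p, R)`, `S₂ = annulus_S(p, R, (1 + 1/t) R)`,
`S₃ = S \ (S₁ ∪ S₂)`, `n' = |S₁ ∪ S₂|` and `n'' = |S₂ ∪ S₃|`, we have `t ≥ 1`,
`R / t ≥ δ`, `δ(S) = min (δ(S₁ ∪ S₂)) (δ(S₂ ∪ S₃))`, `2 ≤ n' ≤ (1 - 1/c) n`,
`2 ≤ n'' ≤ (1 - 1/c) n`, and `n' + n'' ≤ n + n/t`. -/
theorem closest_pair_recursive_step {P : Type*} [MetricSpace P] [Fintype P]
    [DecidableEq P]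
    (d : ℝ) (hd : 1 ≤ d)
    (hP : 2 ≤ Fintype.card P)
    (hdoub : ∀ (p : P) (R : ℝ), 0 < R → ∃ C : Finset P,
      (C.card : ℝ) ≤ (2 : ℝ) ^ d ∧
      Metric.closedBall p R ⊆ ⋃ c ∈ C, Metric.closedBall c (R / 2))
    (δ : ℝ≥0∞) (hδ : δ = closestPairDist (Finset.univ : Finset P))
    (S : Finset P) (n : ℕ) (hn : S.card = n)
    (hnbig : 2 * (16 * Real.exp 1) ^ d ≤ (n : ℝ))
    (hSδ : closestPairDist S = δ)
    (c : ℝ) (hc : c = 2 * (4 * Real.exp 1) ^ d)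
    (t : ℕ) (ht : t = ⌊(1 / (16 * Real.exp 1)) * ((n : ℝ) / 2) ^ (1 / d)⌋₊)
    (p : P) (hp : p ∈ S) (R : ℝ) (hR : 0 < R)
    (hball : (n : ℝ) / c ≤ ((S.filter fun x => dist p x ≤ R).card : ℝ))
    (hann : ((S.filter fun x =>
        R < dist p x ∧ dist p x ≤ (1 + 1 / (t : ℝ)) * R).card : ℝ) ≤ (n : ℝ) / (t : ℝ))
    (hout : (n : ℝ) / 2 ≤
        ((S.filter fun x => ¬ dist p x ≤ (1 + 1 / (t : ℝ)) * R).card : ℝ))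
    (S₁ S₂ S₃ : Finset P)
    (hS₁ : S₁ = S.filter fun x => dist p x ≤ R)
    (hS₂ : S₂ = S.filter fun x => R < dist p x ∧ dist p x ≤ (1 + 1 / (t : ℝ)) * R)
    (hS₃ : S₃ = S \ (S₁ ∪ S₂))
    (n' n'' : ℕ) (hn' : n' = (S₁ ∪ S₂).card) (hn'' : n'' = (S₂ ∪ S₃).card) :
    1 ≤ t ∧
    δ ≤ ENNReal.ofReal (R / (t : ℝ)) ∧
    closestPairDist S =
      min (closestPairDist (S₁ ∪ S₂)) (closestPairDist (S₂ ∪ S₃)) ∧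
    2 ≤ n' ∧ (n' : ℝ) ≤ (1 - 1 / c) * (n : ℝ) ∧
    2 ≤ n'' ∧ (n'' : ℝ) ≤ (1 - 1 / c) * (n : ℝ) ∧
    (n' : ℝ) + (n'' : ℝ) ≤ (n : ℝ) + (n : ℝ) / (t : ℝ) := by
  classical
  have hE : (0:ℝ) < Real.exp 1 := Real.exp_pos 1
  have hE1 : (1:ℝ) ≤ Real.exp 1 := Real.one_le_exp (by norm_num)
  have hd0 : (0:ℝ) < d := lt_of_lt_of_le one_pos hd
  have h16e : (1:ℝ) ≤ 16 * Real.exp 1 := by nlinarith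
  -- (16e)^d ≥ 16e
  have h16d : (16 * Real.exp 1 : ℝ) ≤ (16 * Real.exp 1) ^ d := by
    calc (16 * Real.exp 1 : ℝ) = (16 * Real.exp 1) ^ (1:ℝ) := (Real.rpow_one _).symm
    _ ≤ (16 * Real.exp 1) ^ d := Real.rpow_le_rpow_of_exponent_le h16e hd
  have hn2 : (16*Real.exp 1)^d ≤ (n:ℝ)/2 := by linarith
  -- the quantity whose floor is t
  set x0 : ℝ := (1 / (16 * Real.exp 1)) * ((n : ℝ) / 2) ^ (1 / d) with hx0
  have hy16 : (16 * Real.exp 1 : ℝ) ≤ ((n:ℝ)/2) ^ (1/d) := by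
    have h1 : ((16 * Real.exp 1 : ℝ)^d) ^ (1/d) ≤ ((n:ℝ)/2) ^ (1/d) :=
      Real.rpow_le_rpow (by positivity) hn2 (by positivity)
    rwa [← Real.rpow_mul (by positivity), mul_one_div_cancel hd0.ne', Real.rpow_one] at h1
  have hx01 : (1:ℝ) ≤ x0 := by
    have h := mul_le_mul_of_nonneg_left hy16
      (le_of_lt (by positivity : (0:ℝ) < 1/(16*Real.exp 1)))
    have heq : (1/(16*Real.exp 1)) * (16*Real.exp 1) = 1 := by field_simp
    rw [hx0]; linarith
  have ht1 : 1 ≤ t := by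
    rw [ht]; exact Nat.le_floor (by exact_mod_cast hx01)
  have htR : (1:ℝ) ≤ (t:ℝ) := by exact_mod_cast ht1
  have htR0 : (0:ℝ) < (t:ℝ) := lt_of_lt_of_le one_pos htR
  have htle : (t:ℝ) ≤ x0 := by rw [ht]; exact Nat.floor_le (by positivity)
  set B : ℝ := (1 + 1 / (t : ℝ)) * R with hB
  have hRB : R ≤ B := by
    have h1t : (0:ℝ) < (1/(t:ℝ))*R := by positivity
    have hexp : (1 + 1/(t:ℝ))*R = R + (1/(t:ℝ))*R := by ring
    rw [hB, hexp]; linarith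
  -- basic set facts
  have hS₁S : S₁ ⊆ S := by rw [hS₁]; exact Finset.filter_subset _ _
  have hS₂S : S₂ ⊆ S := by rw [hS₂]; exact Finset.filter_subset _ _
  have hS12S : S₁ ∪ S₂ ⊆ S := Finset.union_subset hS₁S hS₂S
  have hS₃eq : S₃ = S.filter fun x => ¬ dist p x ≤ B := by
    rw [hS₃]
    ext z
    simp only [Finset.mem_sdiff, Finset.mem_union, Finset.mem_filter, hS₁, hS₂, not_or]
    constructor
    · rintro ⟨hzS, h1, h2⟩
      refine ⟨hzS, fun hle => ?_⟩
      have hR1 : ¬ dist p z ≤ R := fun h => h1 ⟨hzS, h⟩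
      exact h2 ⟨hzS, not_le.1 hR1, hle⟩
    · rintro ⟨hzS, hgt⟩
      exact ⟨hzS, fun h => hgt (h.2.trans hRB), fun h => hgt h.2.2⟩
  have hS23 : S₂ ∪ S₃ = S \ S₁ := by
    ext z
    simp only [Finset.mem_union, Finset.mem_sdiff, Finset.mem_filter, hS₂, hS₃eq, hS₁]
    constructor
    · rintro (⟨hzS, hR1, _⟩ | ⟨hzS, hgt⟩)
      · exact ⟨hzS, fun h => absurd h.2 (not_le.2 hR1)⟩
      · exact ⟨hzS, fun h => hgt (h.2.trans hRB)⟩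
    · rintro ⟨hzS, hnot⟩
      have hgtR : R < dist p z := not_le.1 fun h => hnot ⟨hzS, h⟩
      by_cases hle : dist p z ≤ B
      · exact Or.inl ⟨hzS, hgtR, hle⟩
      · exact Or.inr ⟨hzS, hle⟩
  -- cardinality identities
  have hdisj12 : Disjoint S₁ S₂ := by
    rw [Finset.disjoint_left]
    intro a ha hb
    rw [hS₁, Finset.mem_filter] at ha
    rw [hS₂, Finset.mem_filter] at hb
    linarith [ha.2, hb.2.1]
  have hcard3 : S₃.card + n' = n := by
    rw [hn', hS₃, ← hn]
    exact Finset.card_sdiff_add_card_eq_card hS12S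
  have hcard1 : n'' + S₁.card = n := by
    rw [hn'', hS23, ← hn]
    exact Finset.card_sdiff_add_card_eq_card hS₁S
  have hcard12 : n' = S₁.card + S₂.card := by
    rw [hn', Finset.card_union_of_disjoint hdisj12]
  -- key: close pair in S₁
  have key : ∃ x ∈ S₁, ∃ y ∈ S₁, x ≠ y ∧ dist x y ≤ R / (t:ℝ) := by
    set k := Nat.clog 2 (2*t) with hk
    have h2t : 2 ≤ 2*t := by omega
    have hk1 : 1 ≤ k := Nat.clog_pos one_lt_two h2t
    have hle2 : 2*t ≤ 2^k := Nat.le_pow_clog one_lt_two _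
    have hlt2 : 2^(k-1) < 2*t := by
      have := Nat.pow_pred_clog_lt_self one_lt_two (x := 2*t) (by omega)
      simpa [Nat.pred_eq_sub_one, hk] using this
    have hpow : 2^k = 2^(k-1) * 2 := by
      conv_lhs => rw [← Nat.sub_add_cancel hk1, pow_succ]
    have ht2 : t ≤ 2^(k-1) := by
      have h := hle2; rw [hpow] at h
      set m := 2^(k-1); omega
    have h4t : 2^k < 4*t := by
      rw [hpow]
      have h := hlt2
      set m := 2^(k-1); omega
    obtain ⟨C, hC1, hC2⟩ := cover_iter d hdoub p R hR k
    -- card bound chain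
    have heq1 : ((2:ℝ)^d)^k = ((2^k : ℕ) : ℝ)^d := by
      rw [← Real.rpow_natCast ((2:ℝ)^d) k, ← Real.rpow_mul (by norm_num)]
      push_cast
      rw [← Real.rpow_natCast (2:ℝ) k, ← Real.rpow_mul (by norm_num), mul_comm d]
    have hstrict : (((2:ℕ)^k : ℕ):ℝ)^d < ((4*t:ℕ):ℝ)^d := by
      exact Real.rpow_lt_rpow (by positivity) (by exact_mod_cast h4t) hd0
    have h4tn : ((4*t:ℕ):ℝ)^d ≤ (n:ℝ)/c := by
      have h4x : ((4*t:ℕ):ℝ) ≤ (1/(4*Real.exp 1)) * ((n:ℝ)/2)^(1/d) := by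
        push_cast
        have h4 : (4:ℝ) * x0 = (1/(4*Real.exp 1)) * ((n:ℝ)/2)^(1/d) := by
          rw [hx0]; field_simp; ring
        nlinarith
      calc ((4*t:ℕ):ℝ)^d ≤ ((1/(4*Real.exp 1)) * ((n:ℝ)/2)^(1/d))^d :=
            Real.rpow_le_rpow (by positivity) h4x hd0.le
      _ = (1/(4*Real.exp 1))^d * (((n:ℝ)/2)^(1/d))^d := by
            rw [Real.mul_rpow (by positivity) (by positivity)]
      _ = (1/(4*Real.exp 1))^d * ((n:ℝ)/2) := by
            rw [← Real.rpow_mul (by positivity), one_div_mul_cancel hd0.ne', Real.rpow_one]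
      _ = (n:ℝ)/c := by
            rw [hc, one_div, Real.inv_rpow (by positivity)]
            rw [div_eq_mul_inv, div_eq_mul_inv, mul_inv]
            ring
    have hcardC : C.card < S₁.card := by
      have hchain : (C.card : ℝ) < (S₁.card : ℝ) := by
        calc (C.card : ℝ) ≤ ((2:ℝ)^d)^k := hC1
        _ = (((2:ℕ)^k : ℕ):ℝ)^d := by rw [heq1]
        _ < ((4*t:ℕ):ℝ)^d := hstrict
        _ ≤ (n:ℝ)/c := h4tn
        _ ≤ (S₁.card : ℝ) := by rw [hS₁]; exact hball
      exact_mod_cast hchain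
    have hcov : ∀ x ∈ S₁, ∃ cc ∈ C, x ∈ Metric.closedBall cc (R / 2^k) := by
      intro x hx
      rw [hS₁, Finset.mem_filter] at hx
      have hxball : x ∈ Metric.closedBall p R := by
        rw [Metric.mem_closedBall, dist_comm]; exact hx.2
      have := hC2 hxball
      simp only [Set.mem_iUnion, exists_prop] at this
      exact this
    obtain ⟨x, hx, y, hy, hxy, hdxy⟩ := pigeon S₁ C (R/2^k) hcov hcardC
    refine ⟨x, hx, y, hy, hxy, hdxy.trans ?_⟩
    have h2k : (2:ℝ)^k = 2^(k-1) * 2 := by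
      conv_lhs => rw [← Nat.sub_add_cancel hk1, pow_succ]
    have hhalf : 2 * (R / 2^k) = R / 2^(k-1) := by
      rw [h2k]; field_simp
    rw [hhalf]
    apply div_le_div_of_nonneg_left hR.le htR0
    exact_mod_cast ht2
  obtain ⟨x, hx, y, hy, hxy, hdxy⟩ := key
  -- δ bound
  have hδRt : δ ≤ ENNReal.ofReal (R / (t:ℝ)) := by
    rw [← hSδ]
    calc closestPairDist S ≤ edist x y := closestPairDist_le (hS₁S hx) (hS₁S hy) hxy
    _ = ENNReal.ofReal (dist x y) := edist_dist x y
    _ ≤ ENNReal.ofReal (R / (t:ℝ)) := ENNReal.ofReal_le_ofReal hdxy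
  have hδ12Rt : closestPairDist (S₁ ∪ S₂) ≤ ENNReal.ofReal (R / (t:ℝ)) := by
    calc closestPairDist (S₁ ∪ S₂) ≤ edist x y :=
          closestPairDist_le (Finset.mem_union_left _ hx) (Finset.mem_union_left _ hy) hxy
    _ = ENNReal.ofReal (dist x y) := edist_dist x y
    _ ≤ ENNReal.ofReal (R / (t:ℝ)) := ENNReal.ofReal_le_ofReal hdxy
  -- min equality
  have hmin : closestPairDist S =
      min (closestPairDist (S₁ ∪ S₂)) (closestPairDist (S₂ ∪ S₃)) := by
    apply le_antisymm
    · apply le_min (closestPairDist_anti hS12S)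
      apply closestPairDist_anti
      rw [hS23]; exact Finset.sdiff_subset
    · apply le_sInf
      rintro r ⟨a, haS, b, hbS, hab, rfl⟩
      have hmem : ∀ z ∈ S, z ∉ S₁ → z ∈ S₂ ∪ S₃ := by
        intro z hz hz1
        rw [hS23, Finset.mem_sdiff]; exact ⟨hz, hz1⟩
      have mixed : ∀ u v : P, u ∈ S₁ → v ∈ S₃ →
          min (closestPairDist (S₁ ∪ S₂)) (closestPairDist (S₂ ∪ S₃)) ≤ edist u v := by
        intro u v hu hv
        have hdu : dist p u ≤ R := by
          rw [hS₁, Finset.mem_filter] at hu; exact hu.2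
        have hdv : ¬ dist p v ≤ B := by
          rw [hS₃eq, Finset.mem_filter] at hv; exact hv.2
        have hduv : R / (t:ℝ) ≤ dist u v := by
          push_neg at hdv
          have h1 : dist p v ≤ dist p u + dist u v := dist_triangle p u v
          have h2 : B - R = R / (t:ℝ) := by rw [hB]; field_simp; ring
          linarith
        calc min (closestPairDist (S₁ ∪ S₂)) (closestPairDist (S₂ ∪ S₃)) ≤
              closestPairDist (S₁ ∪ S₂) := min_le_left _ _
        _ ≤ ENNReal.ofReal (R / (t:ℝ)) := hδ12Rt
        _ ≤ ENNReal.ofReal (dist u v) := ENNReal.ofReal_le_ofReal hduv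
        _ = edist u v := (edist_dist u v).symm
      by_cases ha1 : a ∈ S₁
      · by_cases hb1 : b ∈ S₁
        · exact le_trans (min_le_left _ _)
            (closestPairDist_le (Finset.mem_union_left _ ha1) (Finset.mem_union_left _ hb1) hab)
        · have hb23 := hmem b hbS hb1
          rcases Finset.mem_union.1 hb23 with hb2 | hb3
          · exact le_trans (min_le_left _ _)
              (closestPairDist_le (Finset.mem_union_left _ ha1) (Finset.mem_union_right _ hb2) hab)
          · exact mixed a b ha1 hb3
      · by_cases hb1 : b ∈ S₁
        · have ha23 := hmem a haS ha1
          rcases Finset.mem_union.1 ha23 with ha2 | ha3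
          · exact le_trans (min_le_left _ _)
              (closestPairDist_le (Finset.mem_union_right _ ha2) (Finset.mem_union_left _ hb1) hab)
          · have := mixed b a hb1 ha3
            rwa [edist_comm] at this
        · exact le_trans (min_le_right _ _)
            (closestPairDist_le (hmem a haS ha1) (hmem b hbS hb1) hab)
  -- numeric bounds
  have hc2 : (2:ℝ) ≤ c := by
    rw [hc]
    have : (1:ℝ) ≤ (4*Real.exp 1)^d := by
      apply Real.one_le_rpow (by nlinarith) hd0.le
    linarith
  have hc0 : (0:ℝ) < c := by linarith
  have hS3big : (n:ℝ)/2 ≤ (S₃.card : ℝ) := by rw [hS₃eq]; exact hout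
  have hS1big : (n:ℝ)/c ≤ (S₁.card : ℝ) := by rw [hS₁]; exact hball
  have hn0 : (0:ℝ) ≤ (n:ℝ) := Nat.cast_nonneg n
  have hcard3R : (S₃.card : ℝ) + (n':ℝ) = (n:ℝ) := by exact_mod_cast hcard3
  have hcard1R : (n'':ℝ) + (S₁.card:ℝ) = (n:ℝ) := by exact_mod_cast hcard1
  have hcard12R : (n':ℝ) = (S₁.card:ℝ) + (S₂.card:ℝ) := by exact_mod_cast hcard12
  have hinvc : 1/c ≤ 1/2 := by
    apply div_le_div_of_nonneg_left (by norm_num) (by norm_num) hc2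
  have hn'le : (n':ℝ) ≤ (1 - 1/c) * (n:ℝ) := by nlinarith
  have hn''le : (n'':ℝ) ≤ (1 - 1/c) * (n:ℝ) := by
    have h1c : (n:ℝ)/c = (1/c) * (n:ℝ) := by ring
    nlinarith
  have hn'2 : 2 ≤ n' := by
    have hsub : ({x, y} : Finset P) ⊆ S₁ ∪ S₂ := by
      intro z hz
      rcases Finset.mem_insert.1 hz with rfl | hz
      · exact Finset.mem_union_left _ hx
      · rw [Finset.mem_singleton] at hz; subst hz; exact Finset.mem_union_left _ hy
    have := Finset.card_le_card hsub
    rw [Finset.card_pair hxy] at this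
    omega
  have hn''2 : 2 ≤ n'' := by
    have h2n : (2:ℝ) ≤ (n:ℝ)/2 := by nlinarith
    have : (2:ℝ) ≤ (n'':ℝ) := by
      have hsub : S₃ ⊆ S₂ ∪ S₃ := Finset.subset_union_right
      have := Finset.card_le_card hsub
      rw [← hn''] at this
      have hcast : (S₃.card:ℝ) ≤ (n'':ℝ) := by exact_mod_cast this
      linarith
    exact_mod_cast this
  have hsum : (n':ℝ) + (n'':ℝ) ≤ (n:ℝ) + (n:ℝ)/(t:ℝ) := by
    have hannR : (S₂.card : ℝ) ≤ (n:ℝ)/(t:ℝ) := by rw [hS₂]; exact hann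
    linarith
  exact ⟨ht1, hδRt, hmin, hn'2, hn'le, hn''2, hn''le, hsum⟩
end
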